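/- Let 0 < y < y' < 1 and let y_mid = (y+y')/2. If j+1 ≥ (ln 4)/kl(y_mid, y'), then for every integer s with (j+1)y ≤ s ≤ (j+1)y_mid, we have P(S_{j+1,y'} ≤ s) ≤ 1/4 ≤ (1/2) P(S_{j+1,y} ≤ s), and hence P(S_{j+1,y} ≤ s) - P(S_{j+1,y'} ≤ s) ≥ (1/2) P(S_{j+1,y} ≤ s). -/

import Mathlib

/-- Binary Kullback-Leibler divergence kl(p,q). -/
noncomputable def kl (p q : ℝ) : ℝ :=
  p * Real.log (p / q) + (1 - p) * Real.log ((1 - p) / (1 - q))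

/-- pmf of the Binomial(n,x) distribution. -/
noncomputable def binomPMF (n : ℕ) (x : ℝ) (s : ℕ) : ℝ :=
  (n.choose s : ℝ) * x ^ s * (1 - x) ^ (n - s)

/-- CDF of the Binomial(n,x) distribution: P(S ≤ k). -/
noncomputable def binomCDF (n : ℕ) (x : ℝ) (k : ℕ) : ℝ :=
  ∑ s ∈ Finset.range (k + 1), binomPMF n x s

/-!
The upper bound is the Chernoff bound `P(S_{n,p} ≤ s) ≤ exp (-n kl(s/n, p))`, obtained by tilting
the binomial law to parameter `s/n`, together with the monotonicity of `kl(·, y')` on `(0, y']`.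

The lower bound is the fact that the median of a binomial law is at least its mean:
`P(S_{n,p} ≤ m) ≥ 1/2` as soon as `n p ≤ m`. Since `d/dp P(S_{n,p} ≤ m) = -n P(S_{n-1,p} = m) ≤ 0`,
it suffices to treat `p = c = m/n`. When the upper tail is the shorter one (`n ≤ 2m+1`), the pairing
`P(S = m+1+i) ≤ P(S = m-i)` bounds it by the lower tail. Otherwise `-d/dp P(S_{n,p} ≤ m)`, which is
proportional to `p^m (1-p)^(n-1-m)`, is larger at `c + x` than at `c - x` (compare logarithmic
derivatives), so `x ↦ P(S_{n,c-x} ≤ m) + P(S_{n,c+x} ≤ m)` decreases on `[0, c]`; comparing its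
values at `0` and `c` gives `1 ≤ 2 P(S_{n,c} ≤ m)`.
-/

open Finset Real

section Binomial

variable {n : ℕ} {x : ℝ}

lemma binomPMF_nonneg (hx0 : 0 ≤ x) (hx1 : x ≤ 1) (s : ℕ) : 0 ≤ binomPMF n x s := by
  have : 0 ≤ 1 - x := by linarith
  unfold binomPMF
  positivity

lemma sum_range_binomPMF (n : ℕ) (x : ℝ) : ∑ s ∈ range (n + 1), binomPMF n x s = 1 := by
  simpa [binomPMF, mul_comm, mul_assoc, mul_left_comm] using (add_pow x (1 - x) n).symm

lemma binomCDF_nonneg (hx0 : 0 ≤ x) (hx1 : x ≤ 1) (k : ℕ) : 0 ≤ binomCDF n x k :=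
  sum_nonneg fun s _ => binomPMF_nonneg hx0 hx1 s

lemma binomCDF_eq_one_of_le {k : ℕ} (h : n ≤ k) (x : ℝ) : binomCDF n x k = 1 := by
  rw [← sum_range_binomPMF n x, binomCDF]
  refine (sum_subset (range_subset_range.2 (by omega)) fun s hs hsn => ?_).symm
  simp only [Finset.mem_range, not_lt] at hs hsn
  simp [binomPMF, Nat.choose_eq_zero_of_lt (show n < s by omega)]

lemma binomCDF_le_one (hx0 : 0 ≤ x) (hx1 : x ≤ 1) (k : ℕ) : binomCDF n x k ≤ 1 := by
  rw [← binomCDF_eq_one_of_le (Nat.le_add_left n k) x]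
  exact sum_le_sum_of_subset_of_nonneg (range_subset_range.2 (by omega))
    fun s _ _ => binomPMF_nonneg hx0 hx1 s

end Binomial

lemma pow_mul_pow_sub_le {α β : ℝ} (hβ : 0 ≤ β) (hβα : β ≤ α) {n k s : ℕ} (hks : k ≤ s)
    (hsn : s ≤ n) : α ^ k * β ^ (n - k) ≤ α ^ s * β ^ (n - s) := by
  obtain ⟨d, rfl⟩ := Nat.exists_eq_add_of_le hks
  calc α ^ k * β ^ (n - k) = α ^ k * β ^ d * β ^ (n - (k + d)) := by
        rw [mul_assoc, ← pow_add]; congr 2; omega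
    _ ≤ α ^ k * α ^ d * β ^ (n - (k + d)) := by
        have : 0 ≤ α := hβ.trans hβα
        gcongr
    _ = α ^ (k + d) * β ^ (n - (k + d)) := by rw [pow_add]

lemma binomPMF_eq_binomPMF_mul {a : ℝ} (ha0 : 0 < a) (ha1 : a < 1) (n k : ℕ) (p : ℝ) :
    binomPMF n p k = binomPMF n a k * ((p / a) ^ k * ((1 - p) / (1 - a)) ^ (n - k)) := by
  have : 1 - a ≠ 0 := by linarith
  unfold binomPMF
  rw [div_pow, div_pow]
  field_simp

lemma exp_neg_mul_kl {n s : ℕ} {p : ℝ} (hs0 : 0 < s) (hsn : s < n) (hp0 : 0 < p) (hp1 : p < 1) :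
    exp (-(n * kl (s / n) p)) = (p / (s / n)) ^ s * ((1 - p) / (1 - s / n)) ^ (n - s) := by
  have hn : (0 : ℝ) < n := by exact_mod_cast hs0.trans hsn
  have ha1 : 0 < 1 - (s : ℝ) / n := by
    rw [sub_pos, div_lt_one hn]; exact_mod_cast hsn
  have hkl : -(n * kl (s / n) p)
      = s * log (p / (s / n)) + (n - s : ℕ) * log ((1 - p) / (1 - s / n)) := by
    rw [kl, ← inv_div p, ← inv_div (1 - p), log_inv, log_inv, Nat.cast_sub hsn.le]
    field_simp
    ring
  rw [hkl, exp_add, exp_nat_mul, exp_nat_mul, exp_log (by positivity),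
    exp_log (div_pos (by linarith) ha1)]

theorem binomCDF_le_exp_neg_kl {n s : ℕ} {p : ℝ} (hs0 : 0 < s) (hsn : s < n) (hp1 : p < 1)
    (hsp : s ≤ n * p) : binomCDF n p s ≤ exp (-(n * kl (s / n) p)) := by
  have hn : (0 : ℝ) < n := by exact_mod_cast hs0.trans hsn
  set a : ℝ := s / n with ha
  have ha0 : 0 < a := by positivity
  have ha1 : a < 1 := by rw [ha, div_lt_one hn]; exact_mod_cast hsn
  have hap : a ≤ p := by rw [ha, div_le_iff₀ hn]; linarith
  have hp0 : 0 < p := ha0.trans_le hap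
  have hratio : (1 - p) / (1 - a) ≤ p / a :=
    calc (1 - p) / (1 - a) ≤ 1 := by rw [div_le_one (by linarith)]; linarith
      _ ≤ p / a := by rw [one_le_div ha0]; exact hap
  calc binomCDF n p s
      ≤ ∑ k ∈ range (s + 1), binomPMF n a k * ((p / a) ^ s * ((1 - p) / (1 - a)) ^ (n - s)) := by
        refine sum_le_sum fun k hk => ?_
        rw [binomPMF_eq_binomPMF_mul ha0 ha1]
        exact mul_le_mul_of_nonneg_left
          (pow_mul_pow_sub_le (div_nonneg (by linarith) (by linarith)) hratio
            (Nat.lt_succ_iff.1 (Finset.mem_range.1 hk)) hsn.le)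
          (binomPMF_nonneg ha0.le ha1.le k)
    _ = binomCDF n a s * ((p / a) ^ s * ((1 - p) / (1 - a)) ^ (n - s)) := by
        rw [binomCDF, sum_mul]
    _ ≤ (p / a) ^ s * ((1 - p) / (1 - a)) ^ (n - s) :=
        mul_le_of_le_one_left (by positivity) (binomCDF_le_one ha0.le ha1.le s)
    _ = exp (-(n * kl a p)) := (exp_neg_mul_kl hs0 hsn hp0 hp1).symm

lemma kl_self (p : ℝ) : kl p p = 0 := by
  rcases eq_or_ne p 0 with rfl | hp0
  · simp [kl]
  rcases eq_or_ne p 1 with rfl | hp1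
  · simp [kl]
  rw [kl, div_self hp0, div_self (sub_ne_zero.2 (Ne.symm hp1))]
  simp

lemma hasDerivAt_kl_left {a p : ℝ} (ha0 : 0 < a) (ha1 : a < 1) (hp0 : 0 < p) (hp1 : p < 1) :
    HasDerivAt (fun b => kl b p) (log (a / p) - log ((1 - a) / (1 - p))) a := by
  have h1 : HasDerivAt (fun b => b / p) (1 / p) a := (hasDerivAt_id a).div_const p
  have h2 : HasDerivAt (fun b => (1 - b) / (1 - p)) (-1 / (1 - p)) a :=
    ((hasDerivAt_id a).const_sub 1).div_const (1 - p)
  have h := ((hasDerivAt_id a).mul (h1.log (by positivity))).add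
    (((hasDerivAt_id a).const_sub 1).mul (h2.log (div_pos (by linarith) (by linarith)).ne'))
  refine h.congr_deriv ?_
  have : 1 - a ≠ 0 := by linarith
  have : 1 - p ≠ 0 := by linarith
  simp only [id]
  field_simp
  ring

lemma kl_strictAntiOn {p : ℝ} (hp1 : p < 1) : StrictAntiOn (fun a => kl a p) (Set.Ioc 0 p) := by
  have hderiv : ∀ a ∈ Set.Ioc 0 p,
      HasDerivAt (fun b => kl b p) (log (a / p) - log ((1 - a) / (1 - p))) a :=
    fun a ha => hasDerivAt_kl_left ha.1 (ha.2.trans_lt hp1) (ha.1.trans_le ha.2) hp1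
  refine strictAntiOn_of_hasDerivWithinAt_neg (convex_Ioc 0 p)
    (fun a ha => (hderiv a ha).continuousAt.continuousWithinAt)
    (fun a ha => (hderiv a (interior_subset ha)).hasDerivWithinAt) fun a ha => ?_
  rw [interior_Ioc] at ha
  have hp0 : 0 < p := ha.1.trans ha.2
  have hlog1 : log (a / p) < 0 := log_neg (div_pos ha.1 hp0) ((div_lt_one hp0).2 ha.2)
  have hlog2 : 0 < log ((1 - a) / (1 - p)) :=
    log_pos ((one_lt_div (by linarith)).2 (by linarith [ha.2]))
  linarith

lemma kl_pos {a p : ℝ} (ha0 : 0 < a) (hap : a < p) (hp1 : p < 1) : 0 < kl a p := by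
  have := kl_strictAntiOn hp1 ⟨ha0, hap.le⟩ ⟨ha0.trans hap, le_rfl⟩ hap
  simpa only [kl_self] using this

lemma binomCDF_succ (n : ℕ) (x : ℝ) (k : ℕ) :
    binomCDF n x (k + 1) = binomCDF n x k + binomPMF n x (k + 1) :=
  sum_range_succ _ _

lemma binomCDF_zero_left (n m : ℕ) : binomCDF n 0 m = 1 := by
  simp [binomCDF, binomPMF, sum_range_succ']

lemma hasDerivAt_binomPMF_succ (N k : ℕ) (x : ℝ) :
    HasDerivAt (fun t => binomPMF (N + 1) t (k + 1))
      ((N + 1) * (binomPMF N x k - binomPMF N x (k + 1))) x := by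
  have h := ((hasDerivAt_pow (k + 1) x).const_mul ((N + 1).choose (k + 1) : ℝ)).mul
    (((hasDerivAt_id x).const_sub 1).pow (N - k))
  have c1 : ((k : ℝ) + 1) * (N + 1).choose (k + 1) = (N + 1) * N.choose k := by
    have := Nat.add_one_mul_choose_eq N k
    exact_mod_cast (mul_comm _ _).trans this.symm
  have c2 : ((N - k : ℕ) : ℝ) * (N + 1).choose (k + 1) = (N + 1) * N.choose (k + 1) := by
    have := Nat.choose_mul_succ_eq N (k + 1)
    rw [Nat.add_sub_add_right] at this
    exact_mod_cast ((mul_comm _ _).trans this.symm).trans (mul_comm _ _)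
  unfold binomPMF
  simp only [Nat.add_sub_add_right, Nat.add_sub_cancel, id, Nat.sub_sub, Pi.pow_apply] at h ⊢
  refine h.congr_deriv ?_
  push_cast
  linear_combination x ^ k * (1 - x) ^ (N - k) * c1 - x ^ (k + 1) * (1 - x) ^ (N - (k + 1)) * c2

lemma hasDerivAt_binomCDF (N m : ℕ) (x : ℝ) :
    HasDerivAt (fun t => binomCDF (N + 1) t m) (-((N + 1) * binomPMF N x m)) x := by
  induction m with
  | zero =>
    have h := ((hasDerivAt_id x).const_sub 1).pow (N + 1)
    simp only [binomCDF, binomPMF, zero_add, range_one, sum_singleton, Nat.choose_zero_right,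
      Nat.cast_one, pow_zero, one_mul, Nat.sub_zero, id] at h ⊢
    refine h.congr_deriv ?_
    push_cast
    ring
  | succ m ih =>
    simp only [binomCDF_succ]
    refine (ih.add (hasDerivAt_binomPMF_succ N m x)).congr_deriv ?_
    ring

lemma binomCDF_antitoneOn (n m : ℕ) : AntitoneOn (fun x => binomCDF n x m) (Set.Icc 0 1) := by
  obtain _ | N := n
  · simp only [binomCDF_eq_one_of_le (Nat.zero_le m)]
    exact antitoneOn_const
  refine antitoneOn_of_hasDerivWithinAt_nonpos (convex_Icc 0 1)
    (fun x _ => (hasDerivAt_binomCDF N m x).continuousAt.continuousWithinAt)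
    (fun x _ => (hasDerivAt_binomCDF N m x).hasDerivWithinAt) fun x hx => ?_
  rw [interior_Icc] at hx
  have := binomPMF_nonneg (n := N) hx.1.le hx.2.le m
  have : (0 : ℝ) ≤ N + 1 := by positivity
  rw [neg_nonpos]
  positivity

lemma binomPMF_succ_mul (n k : ℕ) (x : ℝ) :
    binomPMF n x (k + 1) * ((k + 1) * (1 - x)) = binomPMF n x k * ((n - k) * x) := by
  rcases lt_or_ge k n with hkn | hnk
  · have h := Nat.choose_succ_right_eq n k
    have hc : ((n.choose (k + 1) : ℕ) : ℝ) * (k + 1) = n.choose k * (n - k) := by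
      rw [← Nat.cast_sub hkn.le]; exact_mod_cast h
    have hpow : (1 - x) ^ (n - k) = (1 - x) ^ (n - (k + 1)) * (1 - x) := by
      rw [← pow_succ]; congr 1; omega
    unfold binomPMF
    rw [hpow]
    linear_combination x ^ k * (1 - x) ^ (n - (k + 1)) * x * (1 - x) * hc
  · obtain rfl | hnk := hnk.eq_or_lt
    · simp [binomPMF]
    · simp [binomPMF, Nat.choose_eq_zero_of_lt hnk,
        Nat.choose_eq_zero_of_lt (hnk.trans k.lt_succ_self)]

lemma sq_mul_sq_sub_sq_le {a U M : ℝ} (ha : 0 ≤ a) (haU : a ≤ U) (hUM : U ≤ M + 1) (hM : 0 ≤ M) :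
    M ^ 2 * (U ^ 2 - a ^ 2) ≤ U ^ 2 * ((M + 1) ^ 2 - a ^ 2) := by
  have ha2 : a ^ 2 ≤ U ^ 2 := pow_le_pow_left₀ ha haU 2
  rcases le_total U M with h | h
  · have : U ^ 2 ≤ M ^ 2 := pow_le_pow_left₀ (ha.trans haU) h 2
    nlinarith [mul_nonneg (sq_nonneg a) (sub_nonneg.2 this)]
  · have h1 : M ^ 2 ≤ U ^ 2 := pow_le_pow_left₀ hM h 2
    have h2 : U ^ 2 ≤ (M + 1) ^ 2 := pow_le_pow_left₀ (ha.trans haU) hUM 2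
    nlinarith [mul_nonneg (sub_nonneg.2 ha2) (sub_nonneg.2 h1),
      mul_nonneg (sq_nonneg U) (sub_nonneg.2 h2)]

lemma binomPMF_mean_succ_mul (m u k : ℕ) :
    binomPMF (m + u) (m / (m + u)) (k + 1) * ((k + 1) * u)
      = binomPMF (m + u) (m / (m + u)) k * ((m + u - k) * m) := by
  rcases Nat.eq_zero_or_pos (m + u) with h | h
  · obtain ⟨rfl, rfl⟩ : m = 0 ∧ u = 0 := by omega
    simp
  have hmu : (0 : ℝ) < m + u := by exact_mod_cast h
  have h := binomPMF_succ_mul (m + u) k (m / (m + u))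
  rw [show (1 : ℝ) - m / (m + u) = u / (m + u) by field_simp; ring] at h
  push_cast at h
  field_simp at h
  linear_combination h

lemma binomPMF_mean_succ_add_le {m u : ℕ} (hu : u ≤ m + 1) {i : ℕ} (hi : i < u) :
    binomPMF (m + u) (m / (m + u)) (m + 1 + i) ≤ binomPMF (m + u) (m / (m + u)) (m - i) := by
  set P := binomPMF (m + u) (m / (m + u))
  have hu0 : (0 : ℝ) < u := by exact_mod_cast hi.trans_le' (Nat.zero_le i)
  have hP : ∀ k, 0 ≤ P k :=
    binomPMF_nonneg (by positivity) ((div_le_one (by positivity)).2 (by linarith))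
  have hrec : ∀ k : ℕ, P (k + 1) * ((k + 1) * u) = P k * ((m + u - k) * m) :=
    binomPMF_mean_succ_mul m u
  induction i with
  | zero =>
    refine le_of_mul_le_mul_right (a := ((m : ℝ) + 1) * u) ?_ (by positivity)
    rw [add_zero, Nat.sub_zero, hrec m, add_sub_cancel_left]
    exact mul_le_mul_of_nonneg_left (by nlinarith) (hP m)
  | succ i ih =>
    obtain ⟨l, rfl⟩ : ∃ l, m = l + i + 1 := ⟨m - i - 1, by omega⟩
    -- The step multiplies `P (m+1+i) / P (m-i)` by `m²(u-1-i)(u+1+i) / (u²(m-i)(m+2+i)) ≤ 1`.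
    have hstar : ((l : ℝ) + i + 1) ^ 2 * ((u - 1 - i) * (u + i + 1))
        ≤ u ^ 2 * ((l + 1) * (l + 2 * i + 3)) := by
      have := sq_mul_sq_sub_sq_le (a := (i : ℝ) + 1) (U := u) (M := (l : ℝ) + i + 1)
        (by positivity) (by exact_mod_cast hi.le) (by exact_mod_cast hu) (by positivity)
      linarith
    have h1 := hrec (l + i + 1 + 1 + i)
    have h2 := hrec l
    have ih := ih (by omega)
    rw [show l + i + 1 - i = l + 1 by omega] at ih
    rw [show l + i + 1 - (i + 1) = l by omega,
      show l + i + 1 + 1 + (i + 1) = l + i + 1 + 1 + i + 1 by omega]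
    push_cast at h1 h2 ⊢
    have hui : (0 : ℝ) ≤ u - 1 - i := by
      linarith [show (i : ℝ) + 1 ≤ u by exact_mod_cast hi.le]
    refine le_of_mul_le_mul_right (a := (u : ℝ) ^ 2 * ((l + 1) * (l + 2 * i + 3))) ?_
      (by positivity)
    calc P (l + i + 1 + 1 + i + 1) * (u ^ 2 * ((l + 1) * (l + 2 * i + 3)))
        = P (l + i + 1 + 1 + i) * ((u - 1 - i) * (l + i + 1)) * (u * (l + 1)) := by
          linear_combination (u * ((l : ℝ) + 1)) * h1
      _ ≤ P (l + 1) * ((u - 1 - i) * (l + i + 1)) * (u * (l + 1)) := by gcongr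
      _ = P l * ((l + i + 1) ^ 2 * ((u - 1 - i) * (u + i + 1))) := by
          linear_combination ((u - 1 - i) * ((l : ℝ) + i + 1)) * h2
      _ ≤ P l * (u ^ 2 * ((l + 1) * (l + 2 * i + 3))) := by gcongr; exact hP l

lemma binomCDF_add_sum_tail {n m : ℕ} (hmn : m ≤ n) (x : ℝ) :
    binomCDF n x m + ∑ i ∈ range (n - m), binomPMF n x (m + 1 + i) = 1 := by
  rw [← sum_range_binomPMF n x, binomCDF, ← sum_range_add]
  congr 2
  omega

lemma half_le_binomCDF_mean_add_of_le {m u : ℕ} (hu : u ≤ m + 1) :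
    1 / 2 ≤ binomCDF (m + u) (m / (m + u)) m := by
  set x : ℝ := m / (m + u)
  have hx0 : 0 ≤ x := by positivity
  have hx1 : x ≤ 1 := div_le_one_of_le₀ (le_add_of_nonneg_right u.cast_nonneg) (by positivity)
  have htail := binomCDF_add_sum_tail (Nat.le_add_right m u) x
  rw [Nat.add_sub_cancel_left] at htail
  have hle : ∑ i ∈ range u, binomPMF (m + u) x (m + 1 + i) ≤ binomCDF (m + u) x m :=
    calc ∑ i ∈ range u, binomPMF (m + u) x (m + 1 + i)
        ≤ ∑ i ∈ range u, binomPMF (m + u) x (m + 1 - 1 - i) :=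
          sum_le_sum fun i hi => binomPMF_mean_succ_add_le hu (Finset.mem_range.1 hi)
      _ ≤ ∑ i ∈ range (m + 1), binomPMF (m + u) x (m + 1 - 1 - i) :=
          sum_le_sum_of_subset_of_nonneg (range_subset_range.2 hu)
            fun i _ _ => binomPMF_nonneg hx0 hx1 _
      _ = binomCDF (m + u) x m := sum_range_reflect _ _
  linarith

lemma sub_one_mul_inv_add_inv_le {y M b : ℝ} (hy : 0 ≤ y) (hyM : y < M) (hMb : M ≤ b) :
    (b - 1) * (1 / (b + y) + 1 / (b - y)) ≤ M * (1 / (M + y) + 1 / (M - y)) := by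
  have hsum : ∀ a, y < a → 1 / (a + y) + 1 / (a - y) = 2 * a / (a ^ 2 - y ^ 2) := by
    intro a hya
    have : a - y ≠ 0 := by linarith
    have : a + y ≠ 0 := by linarith
    have : a ^ 2 - y ^ 2 ≠ 0 := by nlinarith
    field_simp
    ring
  have hM2 : 0 < M ^ 2 - y ^ 2 := by nlinarith
  have hb2 : 0 < b ^ 2 - y ^ 2 := by nlinarith
  rw [hsum M hyM, hsum b (hyM.trans_le hMb)]
  calc (b - 1) * (2 * b / (b ^ 2 - y ^ 2))
      = 2 * (b ^ 2 / (b ^ 2 - y ^ 2)) - 2 * b / (b ^ 2 - y ^ 2) := by ring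
    _ ≤ 2 * (b ^ 2 / (b ^ 2 - y ^ 2)) := sub_le_self _ (div_nonneg (by linarith) hb2.le)
    _ ≤ 2 * (M ^ 2 / (M ^ 2 - y ^ 2)) := by
        refine mul_le_mul_of_nonneg_left ?_ zero_le_two
        rw [div_le_div_iff₀ hb2 hM2]
        nlinarith [mul_le_mul hMb hMb (by linarith) (by linarith), sq_nonneg y]
    _ = M * (2 * M / (M ^ 2 - y ^ 2)) := by ring

lemma sub_one_mul_log_sub_log_le {z M b : ℝ} (hz : 0 ≤ z) (hzM : z < M) (hMb : M ≤ b) :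
    (b - 1) * (log (b + z) - log (b - z)) ≤ M * (log (M + z) - log (M - z)) := by
  set H : ℝ → ℝ := fun y => M * (log (M + y) - log (M - y)) - (b - 1) * (log (b + y) - log (b - y))
  have hderiv : ∀ y ∈ Set.Icc 0 z, HasDerivAt H
      (M * (1 / (M + y) + 1 / (M - y)) - (b - 1) * (1 / (b + y) + 1 / (b - y))) y := by
    intro y hy
    have h1 := ((hasDerivAt_id y).const_add M).log (by simp; linarith [hy.1])
    have h2 := ((hasDerivAt_id y).const_sub M).log (by simp; linarith [hy.2])
    have h3 := ((hasDerivAt_id y).const_add b).log (by simp; linarith [hy.1])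
    have h4 := ((hasDerivAt_id y).const_sub b).log (by simp; linarith [hy.2])
    refine (((h1.sub h2).const_mul M).sub ((h3.sub h4).const_mul (b - 1))).congr_deriv ?_
    simp only [id]
    ring
  have hmono : MonotoneOn H (Set.Icc 0 z) :=
    monotoneOn_of_hasDerivWithinAt_nonneg (convex_Icc 0 z)
      (fun y hy => (hderiv y hy).continuousAt.continuousWithinAt)
      (fun y hy => (hderiv y (interior_subset hy)).hasDerivWithinAt) fun y hy => by
        rw [interior_Icc] at hy
        exact sub_nonneg.2 (sub_one_mul_inv_add_inv_le hy.1.le (hy.2.trans hzM) hMb)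
  simpa [H] using hmono ⟨le_rfl, hz⟩ ⟨hz, le_rfl⟩ hz

lemma sub_pow_mul_add_pow_le {m k : ℕ} (hmk : m ≤ k + 1) {z : ℝ} (hz0 : 0 ≤ z) (hzm : z ≤ m) :
    ((m : ℝ) - z) ^ m * ((k : ℝ) + 1 + z) ^ k ≤ ((m : ℝ) + z) ^ m * ((k : ℝ) + 1 - z) ^ k := by
  have hmk' : (m : ℝ) ≤ k + 1 := by exact_mod_cast hmk
  obtain hzm | rfl := hzm.lt_or_eq
  · have h1 : 0 < (m : ℝ) - z := by linarith
    have h2 : 0 < (k : ℝ) + 1 - z := by linarith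
    have h3 : 0 < (k : ℝ) + 1 + z := by linarith
    have h4 : 0 < (m : ℝ) + z := by linarith
    have := sub_one_mul_log_sub_log_le hz0 hzm hmk'
    rw [← log_le_log_iff (by positivity) (by positivity), log_mul (by positivity) (by positivity),
      log_mul (by positivity) (by positivity), log_pow, log_pow, log_pow, log_pow]
    rw [add_sub_cancel_right] at this
    linarith
  · obtain _ | m := m
    · simp
    rw [sub_self, zero_pow m.succ_ne_zero, zero_mul]
    have : (0 : ℝ) ≤ k + 1 - (m + 1 : ℕ) := by linarith
    positivity

lemma binomPMF_mean_sub_le_add {m k : ℕ} (hmk : m ≤ k + 1) {x : ℝ} (hx0 : 0 ≤ x)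
    (hxc : x ≤ m / (m + k + 1)) :
    binomPMF (m + k) (m / (m + k + 1) - x) m ≤ binomPMF (m + k) (m / (m + k + 1) + x) m := by
  set n : ℝ := m + k + 1
  have hn : 0 < n := by positivity
  obtain ⟨z, rfl⟩ : ∃ z, x = z / n := ⟨n * x, by field_simp⟩
  have hz0 : 0 ≤ z := by simpa [div_mul_cancel₀ z hn.ne'] using mul_nonneg hx0 hn.le
  have hzm : z ≤ m := (div_le_div_iff_of_pos_right hn).1 hxc
  have e1 : (m : ℝ) / n - z / n = (m - z) / n := by ring
  have e2 : 1 - ((m : ℝ) / n - z / n) = (k + 1 + z) / n := by field_simp; ring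
  have e3 : (m : ℝ) / n + z / n = (m + z) / n := by ring
  have e4 : 1 - ((m : ℝ) / n + z / n) = (k + 1 - z) / n := by field_simp; ring
  unfold binomPMF
  rw [Nat.add_sub_cancel_left, e2, e4, e1, e3, div_pow, div_pow, div_pow, div_pow, mul_assoc,
    mul_assoc, div_mul_div_comm, div_mul_div_comm]
  exact mul_le_mul_of_nonneg_left
    (div_le_div_of_nonneg_right (sub_pow_mul_add_pow_le hmk hz0 hzm) (by positivity))
    (by positivity)

lemma half_le_binomCDF_mean_add_succ_of_le {m k : ℕ} (hmk : m ≤ k + 1) :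
    1 / 2 ≤ binomCDF (m + k + 1) (m / (m + k + 1)) m := by
  set c : ℝ := m / (m + k + 1)
  have hc0 : 0 ≤ c := by positivity
  have h2c : c + c ≤ 1 := by
    rw [← two_mul, mul_div_assoc', div_le_one (by positivity)]
    exact_mod_cast (by omega : 2 * m ≤ m + k + 1)
  set Ψ : ℝ → ℝ := fun x => binomCDF (m + k + 1) (c - x) m + binomCDF (m + k + 1) (c + x) m
  have hderiv : ∀ x, HasDerivAt Ψ
      ((m + k + 1) * (binomPMF (m + k) (c - x) m - binomPMF (m + k) (c + x) m)) x := by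
    intro x
    have h1 := (hasDerivAt_binomCDF (m + k) m (c - x)).comp x ((hasDerivAt_id x).const_sub c)
    have h2 := (hasDerivAt_binomCDF (m + k) m (c + x)).comp x ((hasDerivAt_id x).const_add c)
    refine (h1.add h2).congr_deriv ?_
    push_cast
    ring
  have hanti : AntitoneOn Ψ (Set.Icc 0 c) :=
    antitoneOn_of_hasDerivWithinAt_nonpos (convex_Icc 0 c)
      (fun x _ => (hderiv x).continuousAt.continuousWithinAt)
      (fun x _ => (hderiv x).hasDerivWithinAt) fun x hx => by
        rw [interior_Icc] at hx
        have := binomPMF_mean_sub_le_add hmk hx.1.le hx.2.le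
        have : (0 : ℝ) ≤ m + k + 1 := by positivity
        exact mul_nonpos_of_nonneg_of_nonpos this (by linarith)
  have h := hanti ⟨le_rfl, hc0⟩ ⟨hc0, le_rfl⟩ hc0
  simp only [Ψ, sub_self, sub_zero, add_zero, binomCDF_zero_left] at h
  have := binomCDF_nonneg (n := m + k + 1) (by linarith) h2c m
  linarith

lemma half_le_binomCDF_mean {n m : ℕ} (hmn : m < n) : 1 / 2 ≤ binomCDF n (m / n) m := by
  rcases le_or_gt n (2 * m + 1) with h | h
  · obtain ⟨u, rfl⟩ := Nat.exists_eq_add_of_le hmn.le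
    simpa using half_le_binomCDF_mean_add_of_le (m := m) (u := u) (by omega)
  · obtain ⟨k, rfl⟩ : ∃ k, n = m + k + 1 := ⟨n - m - 1, by omega⟩
    simpa using half_le_binomCDF_mean_add_succ_of_le (m := m) (k := k) (by omega)

theorem half_le_binomCDF {n m : ℕ} {p : ℝ} (hp : 0 ≤ p) (hnp : n * p ≤ m) :
    1 / 2 ≤ binomCDF n p m := by
  rcases le_or_gt n m with hnm | hmn
  · rw [binomCDF_eq_one_of_le hnm]; norm_num
  have hn : (0 : ℝ) < n := by exact_mod_cast (Nat.zero_le m).trans_lt hmn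
  have hpc : p ≤ m / n := by rw [le_div_iff₀ hn]; linarith
  have hc1 : (m : ℝ) / n ≤ 1 := div_le_one_of_le₀ (by exact_mod_cast hmn.le) hn.le
  exact (half_le_binomCDF_mean hmn).trans
    (binomCDF_antitoneOn n m ⟨hp, hpc.trans hc1⟩ ⟨hp.trans hpc, hc1⟩ hpc)

/-- let 0 < y < y' < 1 and y_mid = (y+y')/2. If j+1 ≥ (ln 4)/kl(y_mid,y'),
then for every integer s with (j+1)y ≤ s ≤ (j+1)y_mid:
P(S_{j+1,y'} ≤ s) ≤ 1/4 ≤ (1/2) P(S_{j+1,y} ≤ s), hence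
P(S_{j+1,y} ≤ s) - P(S_{j+1,y'} ≤ s) ≥ (1/2) P(S_{j+1,y} ≤ s). -/
theorem binomial_middle_case (j s : ℕ) (y y' : ℝ) (hy0 : 0 < y) (hyy : y < y') (hy1 : y' < 1)
    (hj : Real.log 4 / kl ((y + y') / 2) y' ≤ (j : ℝ) + 1)
    (hs1 : ((j : ℝ) + 1) * y ≤ (s : ℝ)) (hs2 : (s : ℝ) ≤ ((j : ℝ) + 1) * ((y + y') / 2)) :
    binomCDF (j + 1) y' s ≤ 1 / 4 ∧
    1 / 4 ≤ (1 / 2) * binomCDF (j + 1) y s ∧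
    (1 / 2) * binomCDF (j + 1) y s ≤ binomCDF (j + 1) y s - binomCDF (j + 1) y' s := by
  have hn : ((j + 1 : ℕ) : ℝ) = j + 1 := by push_cast; ring
  have hs0 : 0 < s := by exact_mod_cast (show (0 : ℝ) < s by nlinarith)
  have hsn : s < j + 1 := by exact_mod_cast (show (s : ℝ) < j + 1 by nlinarith)
  have hkl : log 4 ≤ (j + 1) * kl (s / (j + 1)) y' := by
    have hmid := kl_pos (by linarith : 0 < (y + y') / 2) (by linarith) hy1
    have hs : (s : ℝ) / (j + 1) ≤ (y + y') / 2 := by rw [div_le_iff₀ (by positivity)]; linarith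
    calc log 4 ≤ (j + 1) * kl ((y + y') / 2) y' := (div_le_iff₀ hmid).1 hj
      _ ≤ (j + 1) * kl (s / (j + 1)) y' := by
        gcongr
        exact (kl_strictAntiOn hy1).antitoneOn ⟨by positivity, by linarith⟩
          ⟨by linarith, by linarith⟩ hs
  have hupper : binomCDF (j + 1) y' s ≤ 1 / 4 :=
    calc binomCDF (j + 1) y' s ≤ exp (-((j + 1 : ℕ) * kl (s / (j + 1 : ℕ)) y')) :=
          binomCDF_le_exp_neg_kl hs0 hsn hy1 (by rw [hn]; nlinarith)
      _ ≤ exp (-log 4) := by rw [hn]; gcongr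
      _ = 1 / 4 := by rw [exp_neg, exp_log (by norm_num)]; norm_num
  have hlower : 1 / 2 ≤ binomCDF (j + 1) y s := half_le_binomCDF hy0.le (by rwa [hn])
  exact ⟨hupper, by linarith, by linarith⟩
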